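/- arXiv:1712.04588 — 3 statements merged into one kernel-verified Lean document; each statement's English description precedes it below -/
import Mathlib

section
/- Let f(z) = ((1+z²)/(1−z²))². For every z ∈ ℂ with z² ≠ 1, writing w = f(z), one has |f′(z)|² · (1+|z|²)² = 8|w| · |w−1| · (|w| + |w−1| + 1), where f′ denotes the complex derivative of f. Equivalently, for any s with s² = w, |f′(z)|² · (1+|z|²)² = 4|w||w−1|(|s−1|+|s+1|)²; i.e., the push forward of the round metric 4|dz|²/(1+|z|²)² under f is the metric |dw|²/(|w||w−1|(|√w+1|+|√w−1|)²). -/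
/-!
Write `f = g²` with `g z = (1 + z²)/(1 − z²)` (`fRoot`), a square root of `w = f z`. Then
`g − 1 = 2z²/(1 − z²)` and `g + 1 = 2/(1 − z²)`, so `‖g − 1‖ + ‖g + 1‖ = 2(1 + ‖z‖²)/‖1 − z²‖`,
while `f′ = 2 g g′` with `g′ = 4z/(1 − z²)²`; this gives the second identity for `s = g z`.
By the parallelogram law, `(‖s − 1‖ + ‖s + 1‖)² = 2(‖s²‖ + ‖s² − 1‖ + 1)` depends only on `s²`,
which yields both the first identity and the second one for every square root of `w`.
-/

/-- The map `f(z) = ((1+z²)/(1−z²))²`. -/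
noncomputable def f (z : ℂ) : ℂ := ((1 + z ^ 2) / (1 - z ^ 2)) ^ 2

theorem Complex.norm_sub_one_add_norm_add_one_sq (s : ℂ) :
    (‖s - 1‖ + ‖s + 1‖) ^ 2 = 2 * (‖s ^ 2‖ + ‖s ^ 2 - 1‖ + 1) := by
  have parallelogram : ‖s + 1‖ ^ 2 + ‖s - 1‖ ^ 2 = 2 * (‖s‖ ^ 2 + 1) := by
    simpa [← sq] using parallelogram_law_with_norm ℝ s 1
  have product : ‖s - 1‖ * ‖s + 1‖ = ‖s ^ 2 - 1‖ := by
    rw [← norm_mul]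
    ring_nf
  rw [norm_pow, ← product]
  linear_combination parallelogram

noncomputable def fRoot (z : ℂ) : ℂ := (1 + z ^ 2) / (1 - z ^ 2)

theorem f_eq_fRoot_sq (z : ℂ) : f z = fRoot z ^ 2 := rfl

section

variable {z : ℂ} (hz : 1 - z ^ 2 ≠ 0)
include hz

theorem fRoot_sub_one : fRoot z - 1 = 2 * z ^ 2 / (1 - z ^ 2) := by
  unfold fRoot
  field_simp
  ring

theorem fRoot_add_one : fRoot z + 1 = 2 / (1 - z ^ 2) := by
  unfold fRoot
  field_simp
  ring

theorem hasDerivAt_fRoot : HasDerivAt fRoot (4 * z / (1 - z ^ 2) ^ 2) z := by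
  have num : HasDerivAt (fun z : ℂ => 1 + z ^ 2) (2 * z) z := by
    simpa using (hasDerivAt_pow 2 z).const_add 1
  have den : HasDerivAt (fun z : ℂ => 1 - z ^ 2) (-(2 * z)) z := by
    simpa using (hasDerivAt_pow 2 z).const_sub 1
  exact (num.fun_div den hz).congr_deriv (by ring)

theorem norm_deriv_f : ‖deriv f z‖ = 8 * ‖fRoot z‖ * ‖z‖ / ‖1 - z ^ 2‖ ^ 2 := by
  have hf : HasDerivAt f (2 * fRoot z * (4 * z / (1 - z ^ 2) ^ 2)) z :=
    ((hasDerivAt_fRoot hz).fun_pow 2).congr_deriv (by norm_num)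
  rw [hf.deriv]
  simp only [norm_mul, norm_div, norm_pow, Complex.norm_ofNat]
  ring

theorem norm_deriv_f_sq_mul_one_add_norm_sq :
    ‖deriv f z‖ ^ 2 * (1 + ‖z‖ ^ 2) ^ 2 =
      4 * ‖f z‖ * ‖f z - 1‖ * (‖fRoot z - 1‖ + ‖fRoot z + 1‖) ^ 2 := by
  have hf1 : f z - 1 = (fRoot z - 1) * (fRoot z + 1) := by
    rw [f_eq_fRoot_sq]
    ring
  rw [norm_deriv_f hz, hf1, f_eq_fRoot_sq, fRoot_sub_one hz, fRoot_add_one hz]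
  simp only [norm_mul, norm_div, norm_pow, Complex.norm_ofNat]
  field_simp
  ring

end

/-- Push-forward of the round metric `4|dz|²/(1+|z|²)²` under `f` is the metric
`|dw|²/(|w||w−1|(|√w+1|+|√w−1|)²)`: for `z² ≠ 1` and `w = f(z)` one has
`|f′(z)|²(1+|z|²)² = 8|w||w−1|(|w|+|w−1|+1)`, and equivalently, for any square root `s`
of `w`, `|f′(z)|²(1+|z|²)² = 4|w||w−1|(|s−1|+|s+1|)²`. -/
theorem pushforward_round_metric (z : ℂ) (hz : z ^ 2 ≠ 1) :
    (‖deriv f z‖) ^ 2 * (1 + ‖z‖ ^ 2) ^ 2 =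
      8 * ‖f z‖ * ‖f z - 1‖ *
        (‖f z‖ + ‖f z - 1‖ + 1) ∧
    ∀ s : ℂ, s ^ 2 = f z →
      (‖deriv f z‖) ^ 2 * (1 + ‖z‖ ^ 2) ^ 2 =
        4 * ‖f z‖ * ‖f z - 1‖ *
          (‖s - 1‖ + ‖s + 1‖) ^ 2 := by
  have sum_sq_of_sq_eq : ∀ s : ℂ, s ^ 2 = f z →
      (‖s - 1‖ + ‖s + 1‖) ^ 2 = 2 * (‖f z‖ + ‖f z - 1‖ + 1) := fun s hs => by
    rw [Complex.norm_sub_one_add_norm_add_one_sq, hs]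
  have key := norm_deriv_f_sq_mul_one_add_norm_sq (sub_ne_zero.mpr hz.symm)
  rw [sum_sq_of_sq_eq _ (f_eq_fRoot_sq z).symm] at key
  refine ⟨by rw [key]; ring, fun s hs => by rw [key, sum_sq_of_sq_eq s hs]⟩
end

section
/- Let ρ : ℂ \ {0,1} → ℝ be defined by ρ(w) = 1/(2|w| · |w−1| · (|w| + |w−1| + 1)) (this equals 1/(|w||w−1|(|√w+1|+|√w−1|)²) for any choice of square root). Then ρ is smooth and positive on ℂ \ {0,1} and satisfies the Liouville equation Δ(log ρ)(w) = −2ρ(w) for all w ∈ ℂ \ {0,1}, where Δ is the Euclidean Laplacian on ℂ ≅ ℝ²; i.e., the conformal metric ρ(w)|dw|² has constant Gaussian curvature 1 away from 0 and 1. -/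
/-- The flat Euclidean Laplacian `Δg = ∂²g/∂x² + ∂²g/∂y²` of a function `g : ℂ → ℝ`,
where `ℂ` is identified with `ℝ²` (directions `1` and `I`). -/
noncomputable def laplacian (g : ℂ → ℝ) (w : ℂ) : ℝ :=
  fderiv ℝ (fun v => fderiv ℝ g v 1) w 1 +
    fderiv ℝ (fun v => fderiv ℝ g v Complex.I) w Complex.I

/-- The conformal factor `ρ(w) = 1/(2|w||w−1|(|w|+|w−1|+1))`
(`= 1/(|w||w−1|(|√w+1|+|√w−1|)²)` for any choice of square root). -/
noncomputable def ρ (w : ℂ) : ℝ :=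
  1 / (2 * ‖w‖ * ‖w - 1‖ *
    (‖w‖ + ‖w - 1‖ + 1))

/-! ### Auxiliary definitions -/

lemma cabs_def (z : ℂ) : ‖z‖ = Real.sqrt (z.re ^ 2 + z.im ^ 2) := by
  rw [Complex.norm_def, Complex.normSq_apply]; ring_nf

noncomputable def LA (v : ℂ) : ℂ →L[ℝ] ℝ :=
  (‖v‖)⁻¹ • (v.re • Complex.reCLM + v.im • Complex.imCLM)

lemma hasFDerivAt_normSq' (v : ℂ) : HasFDerivAt Complex.normSq
    ((2 * v.re) • Complex.reCLM + (2 * v.im) • Complex.imCLM) v := by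
  have h1 : HasFDerivAt (fun z : ℂ => z.re * z.re)
      (v.re • Complex.reCLM + v.re • Complex.reCLM) v :=
    (Complex.reCLM.hasFDerivAt (x := v)).mul (Complex.reCLM.hasFDerivAt (x := v))
  have h2 : HasFDerivAt (fun z : ℂ => z.im * z.im)
      (v.im • Complex.imCLM + v.im • Complex.imCLM) v :=
    (Complex.imCLM.hasFDerivAt (x := v)).mul (Complex.imCLM.hasFDerivAt (x := v))
  have h : HasFDerivAt (fun z : ℂ => z.re * z.re + z.im * z.im) _ v := h1.add h2
  have e1 : (fun z : ℂ => z.re * z.re + z.im * z.im) = Complex.normSq := by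
    funext z; simp [Complex.normSq_apply]
  rw [e1] at h
  refine h.congr_fderiv ?_
  module

lemma hasFDerivAt_cabs {v : ℂ} (hv : v ≠ 0) :
    HasFDerivAt (fun z : ℂ => ‖z‖) (LA v) v := by
  have hns : Complex.normSq v ≠ 0 := by
    simpa [Complex.normSq_eq_zero] using hv
  have hsq : HasDerivAt Real.sqrt (1 / (2 * Real.sqrt (Complex.normSq v)))
      (Complex.normSq v) := Real.hasDerivAt_sqrt hns
  have h := hsq.comp_hasFDerivAt v (hasFDerivAt_normSq' v)
  have e : (fun z : ℂ => Real.sqrt (Complex.normSq z))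
      = fun z : ℂ => ‖z‖ := by
    funext z; rw [Complex.norm_def]
  rw [Function.comp_def, e] at h
  refine h.congr_fderiv ?_
  rw [LA, Complex.norm_def]
  match_scalars <;> field_simp

lemma hasFDerivAt_cabs' {v : ℂ} (hv : v ≠ 1) :
    HasFDerivAt (fun z : ℂ => ‖z - 1‖) (LA (v - 1)) v := by
  have h1 : v - 1 ≠ 0 := sub_ne_zero.mpr hv
  have ht : HasFDerivAt (fun z : ℂ => z - 1) (ContinuousLinearMap.id ℝ ℂ) v :=
    (hasFDerivAt_id v).sub_const 1
  have := (hasFDerivAt_cabs h1).comp v ht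
  exact this

noncomputable def G (v : ℂ) : ℝ :=
  -Real.log 2 - Real.log (‖v‖) - Real.log (‖v - 1‖) -
    Real.log (‖v‖ + ‖v - 1‖ + 1)

noncomputable def DG (v : ℂ) : ℂ →L[ℝ] ℝ :=
  -((‖v‖)⁻¹ • LA v) - ((‖v - 1‖)⁻¹ • LA (v - 1)) -
    ((‖v‖ + ‖v - 1‖ + 1)⁻¹ • (LA v + LA (v - 1)))

lemma hG {v : ℂ} (h0 : v ≠ 0) (h1 : v ≠ 1) : HasFDerivAt G (DG v) v := by
  have ha0 : (0:ℝ) < ‖v‖ := norm_pos_iff.mpr h0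
  have hb0 : (0:ℝ) < ‖v - 1‖ := norm_pos_iff.mpr (sub_ne_zero.mpr h1)
  have hu0 : (0:ℝ) < ‖v‖ + ‖v - 1‖ + 1 := by positivity
  have hA := hasFDerivAt_cabs h0
  have hB := hasFDerivAt_cabs' h1
  have hlogA : HasFDerivAt (fun z : ℂ => Real.log (‖z‖))
      ((‖v‖)⁻¹ • LA v) v :=
    (Real.hasDerivAt_log ha0.ne').comp_hasFDerivAt v hA
  have hlogB : HasFDerivAt (fun z : ℂ => Real.log (‖z - 1‖))
      ((‖v - 1‖)⁻¹ • LA (v - 1)) v := by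
    have := (Real.hasDerivAt_log hb0.ne').comp_hasFDerivAt v hB; exact this
  have hsum : HasFDerivAt (fun z : ℂ => ‖z‖ + ‖z - 1‖ + 1)
      (LA v + LA (v - 1)) v := (hA.add hB).add_const 1
  have hlogU : HasFDerivAt
      (fun z : ℂ => Real.log (‖z‖ + ‖z - 1‖ + 1))
      ((‖v‖ + ‖v - 1‖ + 1)⁻¹ • (LA v + LA (v - 1))) v := by
    have := (Real.hasDerivAt_log hu0.ne').comp_hasFDerivAt v hsum; exact this
  have := ((((hasFDerivAt_const (-Real.log 2) v).sub hlogA).sub hlogB).sub hlogU)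
  exact this.congr_fderiv (by rw [DG, zero_sub])

noncomputable def φ₁ (v : ℂ) : ℝ :=
  -(v.re / (‖v‖)^2) - (v.re - 1) / (‖v - 1‖)^2 -
    (v.re / ‖v‖ + (v.re - 1) / ‖v - 1‖) /
      (‖v‖ + ‖v - 1‖ + 1)

noncomputable def φI (v : ℂ) : ℝ :=
  -(v.im / (‖v‖)^2) - v.im / (‖v - 1‖)^2 -
    (v.im / ‖v‖ + v.im / ‖v - 1‖) /
      (‖v‖ + ‖v - 1‖ + 1)

lemma DG_one {v : ℂ} (h0 : v ≠ 0) (h1 : v ≠ 1) : DG v 1 = φ₁ v := by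
  have ha0 : (0:ℝ) < ‖v‖ := norm_pos_iff.mpr h0
  have hb0 : (0:ℝ) < ‖v - 1‖ := norm_pos_iff.mpr (sub_ne_zero.mpr h1)
  simp only [DG, LA, φ₁, ContinuousLinearMap.sub_apply, ContinuousLinearMap.neg_apply,
    ContinuousLinearMap.smul_apply, ContinuousLinearMap.add_apply, smul_eq_mul,
    Complex.reCLM_apply, Complex.imCLM_apply, Complex.one_re, Complex.one_im,
    Complex.sub_re, Complex.sub_im, Complex.one_im, mul_one, mul_zero, add_zero]
  field_simp

lemma DG_I {v : ℂ} (h0 : v ≠ 0) (h1 : v ≠ 1) : DG v Complex.I = φI v := by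
  have ha0 : (0:ℝ) < ‖v‖ := norm_pos_iff.mpr h0
  have hb0 : (0:ℝ) < ‖v - 1‖ := norm_pos_iff.mpr (sub_ne_zero.mpr h1)
  simp only [DG, LA, φI, ContinuousLinearMap.sub_apply, ContinuousLinearMap.neg_apply,
    ContinuousLinearMap.smul_apply, ContinuousLinearMap.add_apply, smul_eq_mul,
    Complex.reCLM_apply, Complex.imCLM_apply, Complex.I_re, Complex.I_im,
    Complex.sub_re, Complex.sub_im, Complex.one_im, mul_one, mul_zero, zero_add]
  field_simp
  ring

lemma isOpen_U : IsOpen {w : ℂ | w ≠ 0 ∧ w ≠ 1} := by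
  have : {w : ℂ | w ≠ 0 ∧ w ≠ 1} = {(0:ℂ)}ᶜ ∩ {(1:ℂ)}ᶜ := by
    ext z; simp [and_comm]
  rw [this]
  exact isOpen_compl_singleton.inter isOpen_compl_singleton

lemma logρ_eq_G {v : ℂ} (h0 : v ≠ 0) (h1 : v ≠ 1) : Real.log (ρ v) = G v := by
  have ha0 : (0:ℝ) < ‖v‖ := norm_pos_iff.mpr h0
  have hb0 : (0:ℝ) < ‖v - 1‖ := norm_pos_iff.mpr (sub_ne_zero.mpr h1)
  have hu0 : (0:ℝ) < ‖v‖ + ‖v - 1‖ + 1 := by positivity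
  rw [ρ, G, one_div, Real.log_inv, Real.log_mul (by positivity) hu0.ne',
    Real.log_mul (by positivity) hb0.ne', Real.log_mul (by norm_num) ha0.ne']
  ring

/-- first derivative of `log ρ` in direction `1` on `U`. -/
lemma fderiv_logρ_one {v : ℂ} (h0 : v ≠ 0) (h1 : v ≠ 1) :
    fderiv ℝ (fun z => Real.log (ρ z)) v 1 = φ₁ v := by
  have hev : (fun z => Real.log (ρ z)) =ᶠ[nhds v] G :=
    Filter.eventually_of_mem (isOpen_U.mem_nhds ⟨h0, h1⟩)
      (fun z hz => logρ_eq_G hz.1 hz.2)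
  rw [hev.fderiv_eq, (hG h0 h1).fderiv, DG_one h0 h1]

lemma fderiv_logρ_I {v : ℂ} (h0 : v ≠ 0) (h1 : v ≠ 1) :
    fderiv ℝ (fun z => Real.log (ρ z)) v Complex.I = φI v := by
  have hev : (fun z => Real.log (ρ z)) =ᶠ[nhds v] G :=
    Filter.eventually_of_mem (isOpen_U.mem_nhds ⟨h0, h1⟩)
      (fun z hz => logρ_eq_G hz.1 hz.2)
  rw [hev.fderiv_eq, (hG h0 h1).fderiv, DG_I h0 h1]

lemma diff_φ₁ {w : ℂ} (h0 : w ≠ 0) (h1 : w ≠ 1) : DifferentiableAt ℝ φ₁ w := by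
  have ha0 : (0:ℝ) < ‖w‖ := norm_pos_iff.mpr h0
  have hb0 : (0:ℝ) < ‖w - 1‖ := norm_pos_iff.mpr (sub_ne_zero.mpr h1)
  have hu0 : (0:ℝ) < ‖w‖ + ‖w - 1‖ + 1 := by positivity
  have hA : DifferentiableAt ℝ (fun z : ℂ => ‖z‖) w :=
    (hasFDerivAt_cabs h0).differentiableAt
  have hB : DifferentiableAt ℝ (fun z : ℂ => ‖z - 1‖) w :=
    (hasFDerivAt_cabs' h1).differentiableAt
  have hre : DifferentiableAt ℝ (fun z : ℂ => z.re) w :=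
    Complex.reCLM.differentiableAt
  have e : φ₁ = fun v : ℂ => -(v.re * ((‖v‖)^2)⁻¹) -
      (v.re - 1) * ((‖v - 1‖)^2)⁻¹ -
      (v.re * (‖v‖)⁻¹ + (v.re - 1) * (‖v - 1‖)⁻¹) *
        (‖v‖ + ‖v - 1‖ + 1)⁻¹ := by
    funext v; simp [φ₁, div_eq_mul_inv]
  rw [e]
  have t1 : DifferentiableAt ℝ (fun z : ℂ => -(z.re * ((‖z‖)^2)⁻¹)) w :=
    (hre.mul ((hA.pow 2).inv (pow_ne_zero 2 ha0.ne'))).neg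
  have t2 : DifferentiableAt ℝ
      (fun z : ℂ => (z.re - 1) * ((‖z - 1‖)^2)⁻¹) w :=
    (hre.sub_const 1).mul ((hB.pow 2).inv (pow_ne_zero 2 hb0.ne'))
  have t3 : DifferentiableAt ℝ (fun z : ℂ =>
      (z.re * (‖z‖)⁻¹ + (z.re - 1) * (‖z - 1‖)⁻¹) *
        (‖z‖ + ‖z - 1‖ + 1)⁻¹) w :=
    ((hre.mul (hA.inv ha0.ne')).add ((hre.sub_const 1).mul (hB.inv hb0.ne'))).mul
      (((hA.add hB).add_const 1).inv hu0.ne')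
  exact (t1.sub t2).sub t3

lemma diff_φI {w : ℂ} (h0 : w ≠ 0) (h1 : w ≠ 1) : DifferentiableAt ℝ φI w := by
  have ha0 : (0:ℝ) < ‖w‖ := norm_pos_iff.mpr h0
  have hb0 : (0:ℝ) < ‖w - 1‖ := norm_pos_iff.mpr (sub_ne_zero.mpr h1)
  have hu0 : (0:ℝ) < ‖w‖ + ‖w - 1‖ + 1 := by positivity
  have hA : DifferentiableAt ℝ (fun z : ℂ => ‖z‖) w :=
    (hasFDerivAt_cabs h0).differentiableAt
  have hB : DifferentiableAt ℝ (fun z : ℂ => ‖z - 1‖) w :=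
    (hasFDerivAt_cabs' h1).differentiableAt
  have him : DifferentiableAt ℝ (fun z : ℂ => z.im) w :=
    Complex.imCLM.differentiableAt
  have e : φI = fun v : ℂ => -(v.im * ((‖v‖)^2)⁻¹) -
      v.im * ((‖v - 1‖)^2)⁻¹ -
      (v.im * (‖v‖)⁻¹ + v.im * (‖v - 1‖)⁻¹) *
        (‖v‖ + ‖v - 1‖ + 1)⁻¹ := by
    funext v; simp [φI, div_eq_mul_inv]
  rw [e]
  have t1 : DifferentiableAt ℝ (fun z : ℂ => -(z.im * ((‖z‖)^2)⁻¹)) w :=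
    (him.mul ((hA.pow 2).inv (pow_ne_zero 2 ha0.ne'))).neg
  have t2 : DifferentiableAt ℝ
      (fun z : ℂ => z.im * ((‖z - 1‖)^2)⁻¹) w :=
    him.mul ((hB.pow 2).inv (pow_ne_zero 2 hb0.ne'))
  have t3 : DifferentiableAt ℝ (fun z : ℂ =>
      (z.im * (‖z‖)⁻¹ + z.im * (‖z - 1‖)⁻¹) *
        (‖z‖ + ‖z - 1‖ + 1)⁻¹) w :=
    ((him.mul (hA.inv ha0.ne')).add (him.mul (hB.inv hb0.ne'))).mul
      (((hA.add hB).add_const 1).inv hu0.ne')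
  exact (t1.sub t2).sub t3


lemma line1 {x y r s : ℝ} (hr : 0 < r) (hs : 0 < s)
    (hrdef : r = Real.sqrt (x^2 + y^2)) (hsdef : s = Real.sqrt ((x-1)^2 + y^2)) :
    HasDerivAt (fun t : ℝ =>
      -((x + t) / (Real.sqrt ((x + t)^2 + y^2))^2) -
      (x + t - 1) / (Real.sqrt ((x + t - 1)^2 + y^2))^2 -
      ((x + t) / Real.sqrt ((x + t)^2 + y^2) +
        (x + t - 1) / Real.sqrt ((x + t - 1)^2 + y^2)) /
        (Real.sqrt ((x + t)^2 + y^2) + Real.sqrt ((x + t - 1)^2 + y^2) + 1))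
      (-((r^2 - 2*x^2)/r^4) - (s^2 - 2*(x-1)^2)/s^4 -
        ((((r^2 - x^2)/r^3 + (s^2 - (x-1)^2)/s^3) * (r+s+1) -
          (x/r + (x-1)/s)^2) / ((r+s+1)^2))) 0 := by
  have h0r : (0:ℝ) < x^2 + y^2 := Real.sqrt_pos.mp (hrdef ▸ hr)
  have h0s : (0:ℝ) < (x-1)^2 + y^2 := Real.sqrt_pos.mp (hsdef ▸ hs)
  have hlin : HasDerivAt (fun t : ℝ => x + t) 1 0 := (hasDerivAt_id 0).const_add x
  have hlin1 : HasDerivAt (fun t : ℝ => x + t - 1) 1 0 := hlin.sub_const 1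
  have ha : HasDerivAt (fun t : ℝ => (x + t)^2 + y^2) (2*x) 0 := by
    have := ((hlin.pow 2).add_const (y^2))
    simpa using this
  have hb : HasDerivAt (fun t : ℝ => (x + t - 1)^2 + y^2) (2*(x-1)) 0 := by
    have := ((hlin1.pow 2).add_const (y^2))
    simpa using this
  have hA : HasDerivAt (fun t : ℝ => Real.sqrt ((x + t)^2 + y^2)) (x/r) 0 := by
    have h := ha.sqrt (by simpa using h0r.ne')
    simp only [add_zero] at h
    rw [← hrdef] at h
    convert h using 1
    rw [mul_div_mul_left x r two_ne_zero]
  have hB : HasDerivAt (fun t : ℝ => Real.sqrt ((x + t - 1)^2 + y^2)) ((x-1)/s) 0 := by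
    have h := hb.sqrt (by simpa using h0s.ne')
    simp only [add_zero] at h
    rw [← hsdef] at h
    convert h using 1
    rw [mul_div_mul_left (x-1) s two_ne_zero]
  have hAne : (Real.sqrt ((x + 0)^2 + y^2))^2 ≠ 0 := by
    simp only [add_zero, ← hrdef]; exact pow_ne_zero 2 hr.ne'
  have hBne : (Real.sqrt ((x + 0 - 1)^2 + y^2))^2 ≠ 0 := by
    simp only [add_zero, ← hsdef]; exact pow_ne_zero 2 hs.ne'
  have hAne1 : Real.sqrt ((x + 0)^2 + y^2) ≠ 0 := by
    simp only [add_zero, ← hrdef]; exact hr.ne'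
  have hBne1 : Real.sqrt ((x + 0 - 1)^2 + y^2) ≠ 0 := by
    simp only [add_zero, ← hsdef]; exact hs.ne'
  have hUne : Real.sqrt ((x + 0)^2 + y^2) + Real.sqrt ((x + 0 - 1)^2 + y^2) + 1 ≠ 0 := by
    simp only [add_zero, ← hrdef, ← hsdef]
    have : (0:ℝ) < r + s + 1 := by linarith
    exact this.ne'
  have H := ((hlin.div (hA.pow 2) hAne).neg.sub (hlin1.div (hB.pow 2) hBne)).sub
    (((hlin.div hA hAne1).add (hlin1.div hB hBne1)).div
      ((hA.add hB).add_const 1) hUne)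
  refine H.congr_deriv ?_
  simp only [Pi.pow_apply, Pi.add_apply, Pi.div_apply, add_zero, pow_one, Nat.cast_ofNat, ← hrdef, ← hsdef]
  have hu : (0:ℝ) < r + s + 1 := by linarith
  field_simp
  ring

lemma line2 {x y r s : ℝ} (hr : 0 < r) (hs : 0 < s)
    (hrdef : r = Real.sqrt (x^2 + y^2)) (hsdef : s = Real.sqrt ((x-1)^2 + y^2)) :
    HasDerivAt (fun t : ℝ =>
      -((y + t) / (Real.sqrt (x^2 + (y + t)^2))^2) -
      (y + t) / (Real.sqrt ((x - 1)^2 + (y + t)^2))^2 -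
      ((y + t) / Real.sqrt (x^2 + (y + t)^2) +
        (y + t) / Real.sqrt ((x - 1)^2 + (y + t)^2)) /
        (Real.sqrt (x^2 + (y + t)^2) + Real.sqrt ((x - 1)^2 + (y + t)^2) + 1))
      (-((r^2 - 2*y^2)/r^4) - (s^2 - 2*y^2)/s^4 -
        ((((r^2 - y^2)/r^3 + (s^2 - y^2)/s^3) * (r+s+1) -
          (y/r + y/s)^2) / ((r+s+1)^2))) 0 := by
  have h0r : (0:ℝ) < x^2 + y^2 := Real.sqrt_pos.mp (hrdef ▸ hr)
  have h0s : (0:ℝ) < (x-1)^2 + y^2 := Real.sqrt_pos.mp (hsdef ▸ hs)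
  have hlin : HasDerivAt (fun t : ℝ => y + t) 1 0 := (hasDerivAt_id 0).const_add y
  have ha : HasDerivAt (fun t : ℝ => x^2 + (y + t)^2) (2*y) 0 := by
    have := ((hlin.pow 2).const_add (x^2))
    simpa using this
  have hb : HasDerivAt (fun t : ℝ => (x - 1)^2 + (y + t)^2) (2*y) 0 := by
    have := ((hlin.pow 2).const_add ((x-1)^2))
    simpa using this
  have hA : HasDerivAt (fun t : ℝ => Real.sqrt (x^2 + (y + t)^2)) (y/r) 0 := by
    have h := ha.sqrt (by simpa using h0r.ne')
    simp only [add_zero] at h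
    rw [← hrdef] at h
    convert h using 1
    rw [mul_div_mul_left y r two_ne_zero]
  have hB : HasDerivAt (fun t : ℝ => Real.sqrt ((x - 1)^2 + (y + t)^2)) (y/s) 0 := by
    have h := hb.sqrt (by simpa using h0s.ne')
    simp only [add_zero] at h
    rw [← hsdef] at h
    convert h using 1
    rw [mul_div_mul_left y s two_ne_zero]
  have hAne : (Real.sqrt (x^2 + (y + 0)^2))^2 ≠ 0 := by
    simp only [add_zero, ← hrdef]; exact pow_ne_zero 2 hr.ne'
  have hBne : (Real.sqrt ((x - 1)^2 + (y + 0)^2))^2 ≠ 0 := by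
    simp only [add_zero, ← hsdef]; exact pow_ne_zero 2 hs.ne'
  have hAne1 : Real.sqrt (x^2 + (y + 0)^2) ≠ 0 := by
    simp only [add_zero, ← hrdef]; exact hr.ne'
  have hBne1 : Real.sqrt ((x - 1)^2 + (y + 0)^2) ≠ 0 := by
    simp only [add_zero, ← hsdef]; exact hs.ne'
  have hUne : Real.sqrt (x^2 + (y + 0)^2) + Real.sqrt ((x - 1)^2 + (y + 0)^2) + 1 ≠ 0 := by
    simp only [add_zero, ← hrdef, ← hsdef]
    have : (0:ℝ) < r + s + 1 := by linarith
    exact this.ne'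
  have H := ((hlin.div (hA.pow 2) hAne).neg.sub (hlin.div (hB.pow 2) hBne)).sub
    (((hlin.div hA hAne1).add (hlin.div hB hBne1)).div
      ((hA.add hB).add_const 1) hUne)
  refine H.congr_deriv ?_
  simp only [Pi.pow_apply, Pi.add_apply, Pi.div_apply, add_zero, pow_one, Nat.cast_ofNat, ← hrdef, ← hsdef]
  have hu : (0:ℝ) < r + s + 1 := by linarith
  field_simp
  ring


lemma keyalg {x y r s : ℝ} (hr : 0 < r) (hs : 0 < s)
    (hr2 : x^2 + y^2 = r^2) (hs2 : (x-1)^2 + y^2 = s^2) :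
    (-((r^2 - 2*x^2)/r^4) - (s^2 - 2*(x-1)^2)/s^4 -
        ((((r^2 - x^2)/r^3 + (s^2 - (x-1)^2)/s^3) * (r+s+1) -
          (x/r + (x-1)/s)^2) / ((r+s+1)^2))) +
    (-((r^2 - 2*y^2)/r^4) - (s^2 - 2*y^2)/s^4 -
        ((((r^2 - y^2)/r^3 + (s^2 - y^2)/s^3) * (r+s+1) -
          (y/r + y/s)^2) / ((r+s+1)^2)))
     = -2 * (1/(2*r*s*(r+s+1))) := by
  have hu : (0:ℝ) < r + s + 1 := by linarith
  have e1 : -((r^2 - 2*x^2)/r^4) - ((r^2 - 2*y^2)/r^4) = 0 := by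
    field_simp; linear_combination 2*hr2
  have e2 : -((s^2 - 2*(x-1)^2)/s^4) - ((s^2 - 2*y^2)/s^4) = 0 := by
    field_simp; linear_combination 2*hs2
  have k3 : -((((r^2 - x^2)/r^3 + (s^2 - (x-1)^2)/s^3) * (r+s+1) -
          (x/r + (x-1)/s)^2) / ((r+s+1)^2)) -
      ((((r^2 - y^2)/r^3 + (s^2 - y^2)/s^3) * (r+s+1) -
          (y/r + y/s)^2) / ((r+s+1)^2)) = -(1/(r*s*(r+s+1))) := by
    have hsq : (y/r + y/s)^2 = y^2*(1/r+1/s)^2 := by ring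
    have hy : y^2 = r^2 - x^2 := by linear_combination hr2
    have hx : x = (r^2 - s^2 + 1)/2 := by linear_combination (hr2 - hs2)/2
    rw [hsq, hy, hx]
    field_simp
    ring
  have hrhs : -2 * (1/(2*r*s*(r+s+1))) = -(1/(r*s*(r+s+1))) := by
    field_simp
  rw [hrhs]
  linear_combination e1 + e2 + k3

/-- `ρ` is smooth and positive on `ℂ \ {0,1}` and satisfies the Liouville equation
`Δ(log ρ) = −2ρ` there; i.e. the metric `ρ|dw|²` has constant Gaussian curvature `1`
away from `0` and `1`. -/
theorem rho_smooth_pos_liouville :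
    ContDiffOn ℝ (⊤ : ℕ∞) ρ {w : ℂ | w ≠ 0 ∧ w ≠ 1} ∧
    (∀ w : ℂ, w ≠ 0 → w ≠ 1 → 0 < ρ w) ∧
    (∀ w : ℂ, w ≠ 0 → w ≠ 1 →
      laplacian (fun v => Real.log (ρ v)) w = -2 * ρ w) := by
  refine ⟨?_, ?_, ?_⟩
  · -- smoothness
    intro v hv
    obtain ⟨h0, h1⟩ := hv
    have ha0 : (0:ℝ) < ‖v‖ := norm_pos_iff.mpr h0
    have hb0 : (0:ℝ) < ‖v - 1‖ := norm_pos_iff.mpr (sub_ne_zero.mpr h1)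
    apply ContDiffAt.contDiffWithinAt
    have hA : ContDiffAt ℝ (⊤ : ℕ∞) (fun z : ℂ => ‖z‖) v := by
      have := contDiffAt_norm (𝕜 := ℝ) (E := ℂ) (n := (⊤ : ℕ∞)) h0
      simpa using this
    have hB : ContDiffAt ℝ (⊤ : ℕ∞) (fun z : ℂ => ‖z - 1‖) v := by
      have h1' : v - 1 ≠ 0 := sub_ne_zero.mpr h1
      have hn := contDiffAt_norm (𝕜 := ℝ) (E := ℂ) (n := (⊤ : ℕ∞)) h1'
      have hsub : ContDiffAt ℝ (⊤ : ℕ∞) (fun z : ℂ => z - 1) v :=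
        contDiffAt_id.sub contDiffAt_const
      have := hn.comp v hsub
      exact this
    have hden : ContDiffAt ℝ (⊤ : ℕ∞) (fun z : ℂ =>
        2 * ‖z‖ * ‖z - 1‖ *
          (‖z‖ + ‖z - 1‖ + 1)) v :=
      ((contDiffAt_const.mul hA).mul hB).mul ((hA.add hB).add contDiffAt_const)
    have hne : 2 * ‖v‖ * ‖v - 1‖ *
        (‖v‖ + ‖v - 1‖ + 1) ≠ 0 := by positivity
    exact contDiffAt_const.div hden hne
  · -- positivity
    intro w h0 h1
    have ha0 : (0:ℝ) < ‖w‖ := norm_pos_iff.mpr h0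
    have hb0 : (0:ℝ) < ‖w - 1‖ := norm_pos_iff.mpr (sub_ne_zero.mpr h1)
    rw [ρ]
    positivity
  · -- Liouville equation
    intro w h0 h1
    have ha0 : (0:ℝ) < ‖w‖ := norm_pos_iff.mpr h0
    have hb0 : (0:ℝ) < ‖w - 1‖ := norm_pos_iff.mpr (sub_ne_zero.mpr h1)
    have hrdef : ‖w‖ = Real.sqrt (w.re^2 + w.im^2) := cabs_def w
    have hsdef : ‖w - 1‖ = Real.sqrt ((w.re - 1)^2 + w.im^2) := by
      rw [cabs_def]; simp [Complex.sub_re, Complex.sub_im]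
    -- the two line derivatives
    have hline1 := line1 (x := w.re) (y := w.im) ha0 hb0 hrdef hsdef
    have hline2 := line2 (x := w.re) (y := w.im) ha0 hb0 hrdef hsdef
    have hfun1 : (fun t : ℝ => φ₁ (w + (t:ℂ))) = (fun t : ℝ =>
        -((w.re + t) / (Real.sqrt ((w.re + t)^2 + w.im^2))^2) -
        (w.re + t - 1) / (Real.sqrt ((w.re + t - 1)^2 + w.im^2))^2 -
        ((w.re + t) / Real.sqrt ((w.re + t)^2 + w.im^2) +
          (w.re + t - 1) / Real.sqrt ((w.re + t - 1)^2 + w.im^2)) /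
          (Real.sqrt ((w.re + t)^2 + w.im^2) +
            Real.sqrt ((w.re + t - 1)^2 + w.im^2) + 1)) := by
      funext t
      simp only [φ₁, cabs_def, Complex.add_re, Complex.add_im, Complex.sub_re,
        Complex.sub_im, Complex.ofReal_re, Complex.ofReal_im, Complex.one_re,
        Complex.one_im, add_zero, sub_zero]
    have hfunI : (fun t : ℝ => φI (w + (t:ℂ) * Complex.I)) = (fun t : ℝ =>
        -((w.im + t) / (Real.sqrt (w.re^2 + (w.im + t)^2))^2) -
        (w.im + t) / (Real.sqrt ((w.re - 1)^2 + (w.im + t)^2))^2 -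
        ((w.im + t) / Real.sqrt (w.re^2 + (w.im + t)^2) +
          (w.im + t) / Real.sqrt ((w.re - 1)^2 + (w.im + t)^2)) /
          (Real.sqrt (w.re^2 + (w.im + t)^2) +
            Real.sqrt ((w.re - 1)^2 + (w.im + t)^2) + 1)) := by
      funext t
      simp only [φI, cabs_def, Complex.add_re, Complex.add_im, Complex.sub_re,
        Complex.sub_im, Complex.mul_re, Complex.mul_im, Complex.I_re, Complex.I_im,
        Complex.ofReal_re, Complex.ofReal_im, Complex.one_re, Complex.one_im,
        mul_zero, zero_mul, mul_one, sub_zero, zero_sub, add_zero, neg_zero, zero_add]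
    have hc1 : HasDerivAt (fun t : ℝ => φ₁ (w + (t:ℂ)))
        (-(((‖w‖)^2 - 2*w.re^2)/(‖w‖)^4) -
          ((‖w-1‖)^2 - 2*(w.re-1)^2)/(‖w-1‖)^4 -
          (((((‖w‖)^2 - w.re^2)/(‖w‖)^3 +
            ((‖w-1‖)^2 - (w.re-1)^2)/(‖w-1‖)^3) *
              (‖w‖ + ‖w-1‖ + 1) -
            (w.re/(‖w‖) + (w.re-1)/(‖w-1‖))^2) /
              ((‖w‖ + ‖w-1‖ + 1)^2))) 0 := by
      rw [hfun1]; exact hline1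
    have hc2 : HasDerivAt (fun t : ℝ => φI (w + (t:ℂ) * Complex.I))
        (-(((‖w‖)^2 - 2*w.im^2)/(‖w‖)^4) -
          ((‖w-1‖)^2 - 2*w.im^2)/(‖w-1‖)^4 -
          (((((‖w‖)^2 - w.im^2)/(‖w‖)^3 +
            ((‖w-1‖)^2 - w.im^2)/(‖w-1‖)^3) *
              (‖w‖ + ‖w-1‖ + 1) -
            (w.im/(‖w‖) + w.im/(‖w-1‖))^2) /
              ((‖w‖ + ‖w-1‖ + 1)^2))) 0 := by
      rw [hfunI]; exact hline2
    -- identify with fderiv of φ₁, φI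
    have hL1 : HasDerivAt (fun t : ℝ => w + (t:ℂ)) 1 0 := by
      simpa using (Complex.ofRealCLM.hasDerivAt (x := (0:ℝ))).const_add w
    have hL2 : HasDerivAt (fun t : ℝ => w + (t:ℂ) * Complex.I) Complex.I 0 := by
      simpa using ((Complex.ofRealCLM.hasDerivAt (x := (0:ℝ))).mul_const
        Complex.I).const_add w
    have hφd := (diff_φ₁ h0 h1).hasFDerivAt
    have hφId := (diff_φI h0 h1).hasFDerivAt
    have hφd' : HasFDerivAt φ₁ (fderiv ℝ φ₁ w) (w + ((0:ℝ):ℂ)) := by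
      rw [show w + ((0:ℝ):ℂ) = w by simp]; exact hφd
    have hφId' : HasFDerivAt φI (fderiv ℝ φI w) (w + ((0:ℝ):ℂ) * Complex.I) := by
      rw [show w + ((0:ℝ):ℂ) * Complex.I = w by simp]; exact hφId
    have hcomp1 := hφd'.comp_hasDerivAt 0 hL1
    have hcompI := hφId'.comp_hasDerivAt 0 hL2
    rw [Function.comp_def] at hcomp1 hcompI
    have heq1 := hcomp1.unique hc1
    have heqI := hcompI.unique hc2
    -- assemble the laplacian
    have hev1 : (fun v => fderiv ℝ (fun z => Real.log (ρ z)) v 1) =ᶠ[nhds w] φ₁ :=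
      Filter.eventually_of_mem (isOpen_U.mem_nhds ⟨h0, h1⟩)
        (fun v hv => fderiv_logρ_one hv.1 hv.2)
    have hevI : (fun v => fderiv ℝ (fun z => Real.log (ρ z)) v Complex.I)
        =ᶠ[nhds w] φI :=
      Filter.eventually_of_mem (isOpen_U.mem_nhds ⟨h0, h1⟩)
        (fun v hv => fderiv_logρ_I hv.1 hv.2)
    rw [laplacian, hev1.fderiv_eq, hevI.fderiv_eq, heq1, heqI, ρ]
    have hr2 : w.re^2 + w.im^2 = (‖w‖)^2 := by
      rw [hrdef, Real.sq_sqrt (by positivity)]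
    have hs2 : (w.re - 1)^2 + w.im^2 = (‖w - 1‖)^2 := by
      rw [hsdef, Real.sq_sqrt (by positivity)]
    exact keyalg ha0 hb0 hr2 hs2
end

section
/- Let f(z) = ((1+z²)/(1−z²))² with complex derivatives f′ and f″. For every s in the open quarter disk Q = {z ∈ ℂ : |z| < 1, Re z > 0, Im z > 0} (so that f′(s) ≠ 0 and t := f(s) lies in the upper half-plane, in particular t ∉ {0,1}), the following identity holds: conj(s)/(2(1+|s|²) f′(s)) + f″(s)/(4 f′(s)²) = 1/(8t) + 1/(8(t−1)) + (conj(t)/|t| + conj(t−1)/|t−1|)/(8(|t| + |t−1| + 1)). (The right-hand side is the Wirtinger derivative ∂_t log(|t||t−1|(|√t+1|+|√t−1|)²)^{1/4}, i.e. the value b(−∞) in the variational formula for the determinant.) -/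
/-- The open quarter of the unit disk. -/
def Q : Set ℂ := {z : ℂ | ‖z‖ < 1 ∧ 0 < z.re ∧ 0 < z.im}

/-!
Write `c = conj s`, `w = (1+s²)/(1−s²)` and `v = 2s/(1−s²)`, so that `f(s) = w²` and
`f(s) − 1 = v²`. Then `|f(s)| = w·conj w` and `|f(s) − 1| = v·conj v` are rational in `s` and
`c`, and so is `|f(s)| + |f(s) − 1| + 1 = 2(1+sc)²/((1−s²)(1−c²))`. Together with the explicit
`f′` and `f″`, the identity becomes an identity of rational functions in two independent
variables `s` and `c`. Finally `Im f(s) = 2 Re w Im w > 0`, since the Cayley transform `w` of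
`s²`, a point of the upper half of the unit disk, lies in the open first quadrant.
-/

open Complex ComplexConjugate

section NormedRing

variable {R : Type*} [NormedRing R] [NormOneClass R] {z : R}

lemma one_sub_ne_zero_of_norm_lt_one (hz : ‖z‖ < 1) : 1 - z ≠ 0 := by
  intro h
  rw [← sub_eq_zero.mp h, norm_one] at hz
  exact lt_irrefl 1 hz

lemma one_add_ne_zero_of_norm_lt_one (hz : ‖z‖ < 1) : 1 + z ≠ 0 := by
  simpa using one_sub_ne_zero_of_norm_lt_one (z := -z) (by rwa [norm_neg])

end NormedRing

lemma re_one_add_div_one_sub_pos {z : ℂ} (hz : ‖z‖ < 1) : 0 < ((1 + z) / (1 - z)).re := by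
  have hN : 0 < normSq (1 - z) := normSq_pos.mpr (one_sub_ne_zero_of_norm_lt_one hz)
  have hz2 : z.re * z.re + z.im * z.im < 1 := by
    rw [← normSq_apply, ← Complex.sq_norm]
    nlinarith [norm_nonneg z]
  rw [div_re, ← add_div]
  apply div_pos _ hN
  simp only [add_re, sub_re, one_re, add_im, sub_im, one_im]
  nlinarith

lemma im_one_add_div_one_sub_pos {z : ℂ} (hz : 0 < z.im) : 0 < ((1 + z) / (1 - z)).im := by
  have hN : 0 < normSq (1 - z) := normSq_pos.mpr fun h => by
    rw [← sub_eq_zero.mp h] at hz; simp at hz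
  rw [div_im, div_sub_div_same]
  apply div_pos _ hN
  simp only [add_re, sub_re, one_re, add_im, sub_im, one_im]
  nlinarith

lemma ofReal_norm_pow_two_eq_mul_conj (w : ℂ) : ((‖w ^ 2‖ : ℝ) : ℂ) = w * conj w := by
  rw [norm_pow, ofReal_pow, mul_conj']

lemma conj_f (z : ℂ) : conj (f z) = f (conj z) := by
  simp [f]

lemma f_sub_one {z : ℂ} (hz : 1 - z ^ 2 ≠ 0) : f z - 1 = (2 * z / (1 - z ^ 2)) ^ 2 := by
  rw [f]
  field_simp
  ring

lemma ofReal_norm_f (z : ℂ) :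
    ((‖f z‖ : ℝ) : ℂ) = (1 + z ^ 2) / (1 - z ^ 2) * ((1 + conj z ^ 2) / (1 - conj z ^ 2)) := by
  rw [f, ofReal_norm_pow_two_eq_mul_conj]
  simp

lemma ofReal_norm_f_sub_one {z : ℂ} (hz : 1 - z ^ 2 ≠ 0) :
    ((‖f z - 1‖ : ℝ) : ℂ) = 2 * z / (1 - z ^ 2) * (2 * conj z / (1 - conj z ^ 2)) := by
  rw [f_sub_one hz, ofReal_norm_pow_two_eq_mul_conj]
  simp [map_ofNat]

lemma hasDerivAt_f {z : ℂ} (hz : 1 - z ^ 2 ≠ 0) :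
    HasDerivAt f (8 * z * (1 + z ^ 2) / (1 - z ^ 2) ^ 3) z := by
  have hsq : HasDerivAt (fun z : ℂ => z ^ 2) (2 * z) z := by
    simpa using hasDerivAt_pow 2 z
  have h : HasDerivAt f _ z := ((hsq.const_add 1).fun_div (hsq.const_sub 1) hz).fun_pow 2
  convert h using 1
  norm_num
  field_simp
  ring

lemma deriv_f {z : ℂ} (hz : 1 - z ^ 2 ≠ 0) :
    deriv f z = 8 * z * (1 + z ^ 2) / (1 - z ^ 2) ^ 3 :=
  (hasDerivAt_f hz).deriv

lemma deriv_deriv_f {z : ℂ} (hz : 1 - z ^ 2 ≠ 0) :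
    deriv (deriv f) z = 8 * (1 + 8 * z ^ 2 + 3 * z ^ 4) / (1 - z ^ 2) ^ 4 := by
  have hopen : IsOpen {w : ℂ | 1 - w ^ 2 ≠ 0} :=
    isOpen_ne_fun (by fun_prop) continuous_const
  have hev : deriv f =ᶠ[nhds z] fun w => 8 * w * (1 + w ^ 2) / (1 - w ^ 2) ^ 3 := by
    filter_upwards [hopen.mem_nhds hz] with w hw using deriv_f hw
  rw [hev.deriv_eq]
  have hsq : HasDerivAt (fun z : ℂ => z ^ 2) (2 * z) z := by
    simpa using hasDerivAt_pow 2 z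
  have hnum : HasDerivAt (fun w : ℂ => 8 * w * (1 + w ^ 2))
      (8 * (1 + z ^ 2) + 8 * z * (2 * z)) z :=
    ((hasDerivAt_id z).const_mul 8).mul (hsq.const_add 1) |>.congr_deriv (by simp)
  rw [(hnum.fun_div ((hsq.const_sub 1).fun_pow 3) (pow_ne_zero 3 hz)).deriv]
  field_simp
  ring

lemma b_minus_infinity_identity_rational {s c : ℂ} (hs : s ≠ 0) (hm : 1 - s ^ 2 ≠ 0)
    (hp : 1 + s ^ 2 ≠ 0) (hmc : 1 - c ^ 2 ≠ 0) (hsc : 1 + s * c ≠ 0) :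
    c / (2 * (1 + s * c) * (8 * s * (1 + s ^ 2) / (1 - s ^ 2) ^ 3)) +
      8 * (1 + 8 * s ^ 2 + 3 * s ^ 4) / (1 - s ^ 2) ^ 4 /
        (4 * (8 * s * (1 + s ^ 2) / (1 - s ^ 2) ^ 3) ^ 2) =
    1 / (8 * ((1 + s ^ 2) / (1 - s ^ 2)) ^ 2) + 1 / (8 * (2 * s / (1 - s ^ 2)) ^ 2) +
      (((1 + c ^ 2) / (1 - c ^ 2)) ^ 2 / ((1 + s ^ 2) / (1 - s ^ 2) * ((1 + c ^ 2) / (1 - c ^ 2))) +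
        (2 * c / (1 - c ^ 2)) ^ 2 / (2 * s / (1 - s ^ 2) * (2 * c / (1 - c ^ 2)))) /
      (8 * ((1 + s ^ 2) / (1 - s ^ 2) * ((1 + c ^ 2) / (1 - c ^ 2)) +
        2 * s / (1 - s ^ 2) * (2 * c / (1 - c ^ 2)) + 1)) := by
  have hsum : (1 + s ^ 2) / (1 - s ^ 2) * ((1 + c ^ 2) / (1 - c ^ 2)) +
        2 * s / (1 - s ^ 2) * (2 * c / (1 - c ^ 2)) + 1 =
      2 * (1 + s * c) ^ 2 / ((1 - s ^ 2) * (1 - c ^ 2)) := by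
    field_simp
    ring
  -- `field_simp` normalizes `s * c` to `c * s`
  have hcs : 1 + c * s ≠ 0 := by rwa [mul_comm]
  rw [hsum]
  field_simp
  ring

/-- For `s` in the open quarter disk `Q` (so `f′(s) ≠ 0` and `t = f(s)` lies in the upper
half-plane, in particular `t ∉ {0,1}`), one has
`conj(s)/(2(1+|s|²)f′(s)) + f″(s)/(4f′(s)²) = 1/(8t) + 1/(8(t−1)) +
(conj(t)/|t| + conj(t−1)/|t−1|)/(8(|t|+|t−1|+1))`;
the right-hand side is the Wirtinger derivative
`∂ₜ log(|t||t−1|(|√t+1|+|√t−1|)²)^{1/4}`, i.e. the value `b(−∞)`. -/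
theorem b_minus_infinity_identity (s : ℂ) (hs : s ∈ Q) :
    deriv f s ≠ 0 ∧ 0 < (f s).im ∧
    (starRingEnd ℂ) s / (2 * ((1 + ‖s‖ ^ 2 : ℝ) : ℂ) * deriv f s) +
      deriv (deriv f) s / (4 * (deriv f s) ^ 2) =
    1 / (8 * f s) + 1 / (8 * (f s - 1)) +
      ((starRingEnd ℂ) (f s) / ((‖f s‖ : ℝ) : ℂ) +
        (starRingEnd ℂ) (f s - 1) / ((‖f s - 1‖ : ℝ) : ℂ)) /
      (8 * ((‖f s‖ + ‖f s - 1‖ + 1 : ℝ) : ℂ)) := by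
  obtain ⟨hnorm, hre, him⟩ := hs
  have hs0 : s ≠ 0 := fun h => by simp [h] at hre
  have hs2 : ‖s ^ 2‖ < 1 := by rw [norm_pow]; nlinarith [norm_nonneg s]
  have hm : 1 - s ^ 2 ≠ 0 := one_sub_ne_zero_of_norm_lt_one hs2
  have hp : 1 + s ^ 2 ≠ 0 := one_add_ne_zero_of_norm_lt_one hs2
  have hmc : 1 - conj s ^ 2 ≠ 0 :=
    one_sub_ne_zero_of_norm_lt_one (by rwa [← map_pow, norm_conj])
  have hsc : 1 + s * conj s ≠ 0 :=
    one_add_ne_zero_of_norm_lt_one (by rw [norm_mul, norm_conj]; nlinarith [norm_nonneg s])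
  refine ⟨by rw [deriv_f hm]; simp [hs0, hp, hm], ?_, ?_⟩
  · have him_sq : 0 < (s ^ 2).im := by rw [sq, mul_im]; nlinarith
    rw [f, sq, mul_im]
    nlinarith [re_one_add_div_one_sub_pos hs2, im_one_add_div_one_sub_pos him_sq]
  · push_cast
    rw [← mul_conj', deriv_deriv_f hm, deriv_f hm, ofReal_norm_f, ofReal_norm_f_sub_one hm,
      map_sub, map_one, conj_f, f_sub_one hm, f_sub_one hmc]
    exact b_minus_infinity_identity_rational hs0 hm hp hmc hsc
end
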